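/- arXiv:1602.07607 — 7 statements merged into one kernel-verified Lean document; each statement's English description precedes it below -/
import Mathlib

section
/- Any k-colouring of the edges of the complete graph on 2^k + 1 vertices contains a monochromatic odd cycle. -/
/-!
If no colour class contained an odd cycle, every class would be 2-colourable, and fixing a
2-colouring of each class sends every vertex to a vector in `Fin k → Fin 2`. Among `2 ^ k + 1`
vertices two share a vector, so the 2-colouring of the class of the edge joining them is not
proper. Odd cycles come from odd closed walks: cutting out a closed subwalk at a repeated vertex
leaves two shorter closed walks, one of which is odd.
-/

namespace SimpleGraph

variable {V : Type*} {G : SimpleGraph V}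

namespace Walk

theorem isPath_or_exists_length_eq_add_loop [DecidableEq V] {u v : V} :
    ∀ p : G.Walk u v, p.IsPath ∨
      ∃ (x : V) (c : G.Walk x x) (q : G.Walk u v), 0 < c.length ∧ p.length = q.length + c.length
  | nil => .inl .nil
  | cons h p => by
    rcases isPath_or_exists_length_eq_add_loop p with hp | ⟨x, c, q, hc, hlen⟩
    · by_cases hu : u ∈ p.support
      · refine .inr ⟨u, cons h (p.takeUntil u hu), p.dropUntil u hu, by simp, ?_⟩
        conv_lhs => rw [← p.take_spec hu]
        simp only [length_cons, length_append]
        omega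
      · exact .inl (hp.cons hu)
    · exact .inr ⟨x, c, cons h q, hc, by simp only [length_cons, hlen]; omega⟩

theorem exists_isCycle_odd_length_of_odd_length [DecidableEq V] {u : V} (w : G.Walk u u)
    (hw : Odd w.length) : ∃ (x : V) (c : G.Walk x x), c.IsCycle ∧ Odd c.length := by
  induction hn : w.length using Nat.strong_induction_on generalizing u with
  | _ n ih =>
  cases w with
  | nil => simp at hw
  | cons h p =>
    rcases isPath_or_exists_length_eq_add_loop p with hp | ⟨x, c, q, hc, hlen⟩
    · have hp₀ : p.length ≠ 0 := fun h₀ ↦ h.ne (eq_of_length_eq_zero h₀).symm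
      refine ⟨u, cons h p, isCycle_iff_isPath_tail_and_le_length.mpr ⟨by simpa using hp, ?_⟩, hw⟩
      have := Nat.odd_iff.mp hw
      simp only [length_cons] at this ⊢
      omega
    · rw [length_cons, hlen] at hn hw
      rcases Nat.even_or_odd c.length with hc_even | hc_odd
      · have hq : Odd (cons h q).length := by
          rw [Nat.odd_iff] at hw ⊢
          rw [Nat.even_iff] at hc_even
          simp only [length_cons]
          omega
        exact ih (cons h q).length (by simp only [length_cons]; omega) (cons h q) hq rfl
      · exact ih c.length (by omega) c hc_odd rfl

end Walk

theorem exists_isCycle_odd_length_of_not_colorable_two (h : ¬ G.Colorable 2) :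
    ∃ (x : V) (c : G.Walk x x), c.IsCycle ∧ Odd c.length := by
  classical
  obtain ⟨u, w, hw⟩ : ∃ (u : V) (w : G.Walk u u), Odd w.length := by
    simpa [two_colorable_iff_forall_loop_even] using h
  exact w.exists_isCycle_odd_length_of_odd_length hw

theorem exists_not_colorable_two_fromEdgeSet_preimage {ι : Type*} [Fintype V] [Fintype ι]
    (C : Sym2 V → ι) (hV : 2 ^ Fintype.card ι < Fintype.card V) :
    ∃ i, ¬ (fromEdgeSet (C ⁻¹' {i})).Colorable 2 := by
  classical
  by_contra! h
  let f i := (h i).some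
  obtain ⟨a, b, hab, hf⟩ :=
    Fintype.exists_ne_map_eq_of_card_lt (fun v i ↦ f i v) (by simpa using hV)
  exact (f (C s(a, b))).valid ((fromEdgeSet_adj _).mpr ⟨rfl, hab⟩) (congrFun hf _)

end SimpleGraph

open SimpleGraph

/-- Any `k`-colouring of the edges of the complete graph on `2^k + 1` vertices
contains a monochromatic odd cycle. -/
theorem stmt0 (k : ℕ) (C : Sym2 (Fin (2 ^ k + 1)) → Fin k) :
    ∃ (v : Fin (2 ^ k + 1)) (w : (⊤ : SimpleGraph (Fin (2 ^ k + 1))).Walk v v),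
      w.IsCycle ∧ Odd w.length ∧ ∃ c : Fin k, ∀ e ∈ w.edges, C e = c := by
  obtain ⟨c, hc⟩ := exists_not_colorable_two_fromEdgeSet_preimage C (by simp)
  obtain ⟨v, w, hw_cycle, hw_odd⟩ := exists_isCycle_odd_length_of_not_colorable_two hc
  refine ⟨v, w.mapLe le_top, hw_cycle.mapLe le_top, by simpa using hw_odd, c, fun e he ↦ ?_⟩
  simp only [Walk.mapLe, Walk.edges_map, Hom.coe_ofLE, Sym2.map_id, List.map_id] at he
  exact (edgeSet_fromEdgeSet _ ▸ w.edges_subset_edgeSet he).1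
end

section
/- If positive integers r_1, ..., r_k and n are such that there exists an (r_1,...,r_k)-rooted-round-colouring of K_n, then there exists an (r_1+2, r_2, ..., r_k, 2r_1 - 1)-rooted-round-colouring of K_{2n-1}. -/
/-!
Write `p` for the levels of colour `0` (the paper's colour `1`, with `r₁` rounds). The new vertex
set consists of a copy `A` of all of `K_n` and a copy `B` of `K_n` minus the root, each new vertex
folding onto its original. An edge whose endpoints fold onto distinct vertices joined by a colour
`c ≠ 0` keeps colour `c`, whose levels are simply pulled back along the fold. Every other edge (an
edge of colour `0` or a twin pair `{a, b}` of copies of one vertex) joins consecutive levels for at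
least one of

* `shiftedLevel`: `p` on `A` and `p + 2` on `B`, modulo `r₁ + 2`;
* `interleavedLevel`: `2p` on `A` and `2p - 1` on `B`, modulo `2r₁ - 1`,

because a colour-`0` step from level `a` to `a + 1` is consecutive for `shiftedLevel` unless it goes
from `A` to `B` or from `A` back to the root, and those steps, as well as the twin pairs, are
consecutive for `interleavedLevel`. Such an edge gets colour `0` if it is consecutive for
`shiftedLevel`, and the new last colour otherwise. In both level functions only the root has level
`0`, as `B` avoids the root.
-/

/-- The colour class of colour `c` in an edge colouring `C` of a complete graph. -/
def classOf {n : ℕ} {κ : Type*} (C : Sym2 (Fin n) → κ) (c : κ) : SimpleGraph (Fin n) :=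
  SimpleGraph.fromRel fun x y => C s(x, y) = c

/-- `G` is a rooted `r`-round graph with root `O`: the vertices are partitioned
into parts indexed cyclically by `ZMod r`, every edge joins cyclically
consecutive parts, and the part `X_1` (index `0`) is exactly `{O}`. -/
def IsRootedRound {V : Type*} (G : SimpleGraph V) (r : ℕ) (O : V) : Prop :=
  ∃ p : V → ZMod r,
    (∀ u v : V, G.Adj u v → p v = p u + 1 ∨ p u = p v + 1) ∧
    p O = 0 ∧ ∀ v : V, p v = 0 → v = O

/-- `C` is an `(r_1, …, r_k)`-rooted-round-colouring of `K_n`: there is a common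
root `O` such that each colour class `i` is a rooted `r_i`-round graph with root `O`. -/
def IsRRC (n : ℕ) (rs : List ℕ) (C : Sym2 (Fin n) → Fin rs.length) : Prop :=
  ∃ O : Fin n, ∀ i : Fin rs.length, IsRootedRound (classOf C i) (rs.get i) O

open SimpleGraph Function

section ColourClass

variable {V W κ κ' : Type*}

/-- `classOf` over an arbitrary vertex type; `classOf C c` is `colourClass C c` by definition. -/
def colourClass (C : Sym2 V → κ) (c : κ) : SimpleGraph V :=
  fromRel fun x y => C s(x, y) = c

@[simp] lemma colourClass_adj {C : Sym2 V → κ} {c : κ} {x y : V} :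
    (colourClass C c).Adj x y ↔ x ≠ y ∧ C s(x, y) = c := by
  simp [colourClass, Sym2.eq_swap]

lemma colourClass_comp_sym2Map {f : W → V} (hf : Injective f) (C : Sym2 V → κ) (c : κ) :
    colourClass (C ∘ Sym2.map f) c = (colourClass C c).comap f := by
  ext x y
  simp [hf.ne_iff]

lemma colourClass_comp_of_injective {τ : κ → κ'} (hτ : Injective τ) (C : Sym2 V → κ)
    (c : κ) :
    colourClass (τ ∘ C) (τ c) = colourClass C c := by
  ext x y
  simp [hτ.eq_iff]

end ColourClass

section RoundGraph

variable {V W : Type*} {r : ℕ}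

def roundGraph (p : V → ZMod r) : SimpleGraph V :=
  fromRel fun u v => p v = p u + 1

lemma isRootedRound_iff {G : SimpleGraph V} {O : V} :
    IsRootedRound G r O ↔
      ∃ p : V → ZMod r, G ≤ roundGraph p ∧ p O = 0 ∧ ∀ v, p v = 0 → v = O :=
  exists_congr fun _ => and_congr_left' ⟨fun h u v huv => ⟨G.ne_of_adj huv, h u v huv⟩,
    fun h _ _ huv => (h huv).2⟩

lemma IsRootedRound.mono {G H : SimpleGraph V} {O : V} (hG : IsRootedRound G r O) (hH : H ≤ G) :
    IsRootedRound H r O := by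
  obtain ⟨p, hp, hO, h0⟩ := isRootedRound_iff.1 hG
  exact isRootedRound_iff.2 ⟨p, hH.trans hp, hO, h0⟩

lemma IsRootedRound.comap {G : SimpleGraph V} {O : V} (hG : IsRootedRound G r O) {f : W → V}
    {O' : W} (hf : ∀ w, f w = O ↔ w = O') : IsRootedRound (G.comap f) r O' := by
  obtain ⟨p, hp, hO, h0⟩ := hG
  refine ⟨p ∘ f, fun u v huv => hp _ _ huv, ?_, fun w hw => (hf w).1 (h0 _ hw)⟩
  rw [comp_apply, (hf O').2 rfl, hO]

end RoundGraph

lemma ZMod.val_eq_succ_or_wrap {r : ℕ} [NeZero r] {x y : ZMod r} (h : y = x + 1) :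
    y.val = x.val + 1 ∨ x.val + 1 = r ∧ y = 0 := by
  have hy : y = ((x.val + 1 : ℕ) : ZMod r) := by
    rw [h]; push_cast; rw [ZMod.natCast_zmod_val]
  rcases (x.val + 1).lt_or_ge r with hlt | hge
  · exact .inl (hy ▸ ZMod.val_natCast_of_lt hlt)
  · have hr : x.val + 1 = r := le_antisymm x.val_lt hge
    exact .inr ⟨hr, by rw [hy, hr, ZMod.natCast_self]⟩

lemma ZMod.natCast_add_one_eq_zero {m a : ℕ} (h : a + 1 = m) : (a : ZMod m) + 1 = 0 := by
  rw [← Nat.cast_add_one, h, ZMod.natCast_self]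

lemma ZMod.eq_zero_of_natCast_eq_zero_of_lt {m a : ℕ} (hlt : a < m) (h : (a : ZMod m) = 0) :
    a = 0 := by
  simpa [ZMod.val_natCast_of_lt hlt] using congrArg ZMod.val h

section Doubling

variable {V : Type*} {O : V}

abbrev Doubled (V : Type*) (O : V) := V ⊕ {v : V // v ≠ O}

def fold : Doubled V O → V := Sum.elim id Subtype.val

lemma fold_eq_root_iff {w : Doubled V O} : fold w = O ↔ w = .inl O := by
  rcases w with v | ⟨v, hv⟩
  · simp [fold]
  · simp [fold, hv]

variable {r : ℕ} (p : V → ZMod r)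

def shiftedLevel : Doubled V O → ZMod (r + 2) :=
  Sum.elim (fun v => (p v).val) (fun v => (p v).val + 2)

def interleavedLevel : Doubled V O → ZMod (2 * r - 1) :=
  Sum.elim (fun v => 2 * (p v).val) (fun v => 2 * (p v).val - 1)

variable {p}

lemma interleavedLevel_adj_of_fold_eq {w w' : Doubled V O} (hne : w ≠ w')
    (h : fold w = fold w') : (roundGraph (interleavedLevel p)).Adj w w' := by
  refine ⟨hne, ?_⟩
  rcases w with v | ⟨v, hv⟩ <;> rcases w' with v' | ⟨v', hv'⟩ <;>
    simp only [fold, Sum.elim_inl, Sum.elim_inr, id] at h <;> subst h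
  · exact absurd rfl hne
  · simp [interleavedLevel]
  · simp [interleavedLevel]
  · exact absurd rfl hne

variable [NeZero r] (hp0 : ∀ v, p v = 0 → v = O)
include hp0

lemma shiftedLevel_or_interleavedLevel_adj_of_succ {w w' : Doubled V O} (hne : w ≠ w')
    (h : p (fold w') = p (fold w) + 1) :
    (roundGraph (shiftedLevel p)).Adj w w' ∨ (roundGraph (interleavedLevel p)).Adj w w' := by
  rcases ZMod.val_eq_succ_or_wrap h with hb | ⟨ha, hb⟩
  · rcases w with v | ⟨v, hv⟩ <;> rcases w' with v' | ⟨v', hv'⟩ <;>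
      simp only [fold, Sum.elim_inl, Sum.elim_inr, id] at hb
    · exact .inl ⟨hne, .inl (by simp only [shiftedLevel, Sum.elim_inl, hb]; push_cast; ring)⟩
    · exact .inr ⟨hne, .inl (by
        simp only [interleavedLevel, Sum.elim_inl, Sum.elim_inr, hb]; push_cast; ring)⟩
    · exact .inl ⟨hne, .inr (by
        simp only [shiftedLevel, Sum.elim_inl, Sum.elim_inr, hb]; push_cast; ring)⟩
    · exact .inl ⟨hne, .inl (by simp only [shiftedLevel, Sum.elim_inr, hb]; push_cast; ring)⟩
  · obtain rfl : w' = .inl O := fold_eq_root_iff.1 (hp0 _ hb)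
    rcases w with v | ⟨v, hv⟩ <;> simp only [fold, Sum.elim_inl, Sum.elim_inr, id] at ha hb
    · refine .inr ⟨hne, .inl ?_⟩
      simp only [interleavedLevel, Sum.elim_inl, hb, ZMod.val_zero, Nat.cast_zero, mul_zero]
      exact_mod_cast (ZMod.natCast_add_one_eq_zero (by omega)).symm
    · refine .inl ⟨hne, .inl ?_⟩
      simp only [shiftedLevel, Sum.elim_inl, Sum.elim_inr, hb, ZMod.val_zero, Nat.cast_zero]
      exact_mod_cast (ZMod.natCast_add_one_eq_zero (by omega)).symm

lemma eq_inl_of_shiftedLevel_eq_zero {w : Doubled V O} (h : shiftedLevel p w = 0) :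
    w = .inl O := by
  have hlt := (p (fold w)).val_lt
  rcases w with v | ⟨v, hv⟩ <;>
    simp only [fold, shiftedLevel, Sum.elim_inl, Sum.elim_inr, id] at h hlt
  · rw [hp0 v ((ZMod.val_eq_zero _).1 (ZMod.eq_zero_of_natCast_eq_zero_of_lt (by omega) h))]
  · have := ZMod.eq_zero_of_natCast_eq_zero_of_lt (a := (p v).val + 2) (m := r + 2) (by omega)
      (by exact_mod_cast h)
    omega

lemma eq_inl_of_interleavedLevel_eq_zero {w : Doubled V O} (h : interleavedLevel p w = 0) :
    w = .inl O := by
  have hlt := (p (fold w)).val_lt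
  rcases w with v | ⟨v, hv⟩ <;>
    simp only [fold, interleavedLevel, Sum.elim_inl, Sum.elim_inr, id] at h hlt
  · have := ZMod.eq_zero_of_natCast_eq_zero_of_lt (a := 2 * (p v).val) (m := 2 * r - 1) (by omega)
      (by exact_mod_cast h)
    rw [hp0 v ((ZMod.val_eq_zero _).1 (by omega))]
  · have hpos : (p v).val ≠ 0 := fun h0 => hv (hp0 v ((ZMod.val_eq_zero _).1 h0))
    have := ZMod.eq_zero_of_natCast_eq_zero_of_lt (a := 2 * (p v).val - 1) (m := 2 * r - 1)
      (by omega) (by rw [Nat.cast_sub (by omega)]; exact_mod_cast h)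
    omega

end Doubling

section DoubledColouring

variable {V : Type*} {O : V} {r k : ℕ} {C : Sym2 V → Fin (k + 1)} {p : V → ZMod r}

open Classical in
noncomputable def doubledColouring (C : Sym2 V → Fin (k + 1)) (p : V → ZMod r)
    (e : Sym2 (Doubled V O)) : Fin (k + 2) :=
  if (e.map fold).IsDiag ∨ C (e.map fold) = 0 then
    if e ∈ (roundGraph (shiftedLevel p)).edgeSet then 0 else Fin.last (k + 1)
  else (C (e.map fold)).castSucc

lemma colourClass_doubledColouring_zero_le :
    colourClass (doubledColouring (O := O) C p) 0 ≤ roundGraph (shiftedLevel p) := by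
  intro w w' h
  obtain ⟨-, hD⟩ := colourClass_adj.1 h
  unfold doubledColouring at hD
  split_ifs at hD with hold hq
  · exact hq
  · exact absurd hD Fin.last_pos.ne'
  · simp_all

lemma colourClass_doubledColouring_castSucc_le {c : Fin (k + 1)} (hc : c ≠ 0) :
    colourClass (doubledColouring (O := O) C p) c.castSucc ≤ (colourClass C c).comap fold := by
  intro w w' h
  obtain ⟨-, hD⟩ := colourClass_adj.1 h
  unfold doubledColouring at hD
  split_ifs at hD with hold hq
  · exact absurd hD.symm (by simpa using hc)
  · exact absurd hD.symm (Fin.castSucc_lt_last c).ne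
  · simp_all

lemma isRootedRound_doubledColouring_castSucc {R : ℕ} {c : Fin (k + 1)} (hc : c ≠ 0)
    (hC : IsRootedRound (colourClass C c) R O) :
    IsRootedRound (colourClass (doubledColouring C p) c.castSucc) R (.inl O : Doubled V O) :=
  (hC.comap fun _ => fold_eq_root_iff).mono (colourClass_doubledColouring_castSucc_le hc)

variable [NeZero r] (hp0 : ∀ v, p v = 0 → v = O)
include hp0

lemma isRootedRound_doubledColouring_zero (hpO : p O = 0) :
    IsRootedRound (colourClass (doubledColouring C p) 0) (r + 2) (.inl O : Doubled V O) :=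
  isRootedRound_iff.2 ⟨_, colourClass_doubledColouring_zero_le,
    by simp [shiftedLevel, hpO], fun _ => eq_inl_of_shiftedLevel_eq_zero hp0⟩

variable (hC0 : colourClass C 0 ≤ roundGraph p)
include hC0

lemma colourClass_doubledColouring_last_le :
    colourClass (doubledColouring (O := O) C p) (Fin.last (k + 1)) ≤
      roundGraph (interleavedLevel p) := by
  intro w w' h
  obtain ⟨hne, hD⟩ := colourClass_adj.1 h
  unfold doubledColouring at hD
  split_ifs at hD with hold hq
  · exact absurd hD Fin.last_pos.ne
  · simp only [Sym2.map_mk, Sym2.mk_isDiag_iff] at hold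
    by_cases htwin : fold w = fold w'
    · exact interleavedLevel_adj_of_fold_eq hne htwin
    have hq' : ¬ (roundGraph (shiftedLevel p)).Adj w w' := hq
    have hold0 : (colourClass C 0).Adj (fold w) (fold w') :=
      colourClass_adj.2 ⟨htwin, hold.resolve_left htwin⟩
    rcases (hC0 hold0).2 with hsucc | hsucc
    · exact (shiftedLevel_or_interleavedLevel_adj_of_succ hp0 hne hsucc).resolve_left hq'
    · exact ((shiftedLevel_or_interleavedLevel_adj_of_succ hp0 hne.symm hsucc).resolve_left
        (fun h => hq' h.symm)).symm
  · exact absurd hD (Fin.castSucc_lt_last _).ne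

lemma isRootedRound_doubledColouring_last (hpO : p O = 0) :
    IsRootedRound (colourClass (doubledColouring C p) (Fin.last (k + 1))) (2 * r - 1)
      (.inl O : Doubled V O) :=
  isRootedRound_iff.2 ⟨_, colourClass_doubledColouring_last_le hp0 hC0,
    by simp [interleavedLevel, hpO], fun _ => eq_inl_of_interleavedLevel_eq_zero hp0⟩

end DoubledColouring

lemma exists_isRRC_of_equiv {W : Type*} {N m : ℕ} {L : List ℕ} (hL : L.length = m)
    (e : Fin N ≃ W) (D : Sym2 W → Fin m) (O : W)
    (hD : ∀ j, IsRootedRound (colourClass D j) (L.get (Fin.cast hL.symm j)) O) :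
    ∃ C, IsRRC N L C := by
  refine ⟨Fin.cast hL.symm ∘ D ∘ Sym2.map e, e.symm O, fun i => ?_⟩
  have hclass : classOf (Fin.cast hL.symm ∘ D ∘ Sym2.map e) i =
      (colourClass D (Fin.cast hL i)).comap e := by
    rw [← colourClass_comp_sym2Map e.injective,
      ← colourClass_comp_of_injective (Fin.cast_injective hL.symm), Fin.cast_cast,
      Fin.cast_eq_self]
    rfl
  rw [hclass]
  simpa using (hD (Fin.cast hL i)).comap fun w => e.eq_symm_apply.symm

theorem stmt6_general (n r1 : ℕ) (rs : List ℕ) (hr1 : 0 < r1)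
    (h : ∃ C : Sym2 (Fin n) → Fin (r1 :: rs).length, IsRRC n (r1 :: rs) C) :
    ∃ C : Sym2 (Fin (2 * n - 1)) → Fin ((r1 + 2) :: (rs ++ [2 * r1 - 1])).length,
      IsRRC (2 * n - 1) ((r1 + 2) :: (rs ++ [2 * r1 - 1])) C := by
  obtain ⟨C, O, hC⟩ := h
  have : NeZero r1 := ⟨hr1.ne'⟩
  have hroot : IsRootedRound (classOf C 0) r1 O := hC 0
  obtain ⟨p, hC0, hpO, hp0⟩ := isRootedRound_iff.1 hroot
  have hcard : Fintype.card (Doubled (Fin n) O) = 2 * n - 1 := by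
    simp [Fintype.card_subtype_compl]
    omega
  refine exists_isRRC_of_equiv (m := rs.length + 2) (by simp)
    (Fintype.equivFinOfCardEq hcard).symm (doubledColouring C p) (.inl O) fun j => ?_
  induction j using Fin.lastCases with
  | last => simpa using isRootedRound_doubledColouring_last hp0 hC0 hpO
  | cast c =>
    induction c using Fin.cases with
    | zero => simpa using isRootedRound_doubledColouring_zero hp0 hpO
    | succ c => simpa [List.getElem_append_left c.isLt] using
        isRootedRound_doubledColouring_castSucc (p := p) c.succ_ne_zero (hC c.succ)

/-- If there is an `(r_1, …, r_k)`-rooted-round-colouring of `K_n`, then there is an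
`(r_1 + 2, r_2, …, r_k, 2r_1 - 1)`-rooted-round-colouring of `K_{2n-1}`. -/
theorem stmt6 (n r1 : ℕ) (rs : List ℕ) (hn : 0 < n) (hr1 : 0 < r1)
    (hrs : ∀ r ∈ rs, 0 < r)
    (h : ∃ C : Sym2 (Fin n) → Fin (r1 :: rs).length, IsRRC n (r1 :: rs) C) :
    ∃ C : Sym2 (Fin (2 * n - 1)) → Fin ((r1 + 2) :: (rs ++ [2 * r1 - 1])).length,
      IsRRC (2 * n - 1) ((r1 + 2) :: (rs ++ [2 * r1 - 1])) C :=
  stmt6_general n r1 rs hr1 h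
end

section
/- Let r be an integer, and let A be a colouring of the complete graph G and B a colouring (in disjoint colours) of the complete graph H, both with no monochromatic odd cycle of length less than r. Then any product colouring of G × H in ×(A,B) also has no monochromatic odd cycle of length less than r. -/
/-!
An edge of colour `inl a` in a product colouring joins two vertices with distinct first
coordinates whose `A`-colour is `a` (and symmetrically for `inr b`). So projecting a
monochromatic odd cycle of the product onto the factor owning its colour gives a closed walk of
the same odd length, monochromatic in that factor. Every odd closed walk contains, among its own
edges, an odd cycle no longer than itself, and this cycle is long by hypothesis.
-/

namespace SimpleGraph.Walk

variable {V V' : Type*} {G : SimpleGraph V} {G' : SimpleGraph V'}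

theorem IsPath.isCycle_cons_of_odd_length {u v : V} {p : G.Walk v u} (hp : p.IsPath)
    (hadj : G.Adj u v) (hodd : Odd (cons hadj p).length) : (cons hadj p).IsCycle := by
  refine isCycle_iff_isPath_tail_and_le_length.mpr ⟨by simpa, ?_⟩
  have hp0 : p.length ≠ 0 := fun h0 => by
    cases p with
    | nil => exact G.loopless.irrefl _ hadj
    | cons => simp at h0
  rw [length_cons] at hodd ⊢
  rcases hodd with ⟨k, hk⟩
  omega

theorem exists_odd_isCycle_of_odd_length {v : V} (w : G.Walk v v) (hw : Odd w.length) :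
    ∃ (u : V) (c : G.Walk u u), c.IsCycle ∧ Odd c.length ∧ c.length ≤ w.length ∧
      c.edges ⊆ w.edges := by
  induction hl : w.length using Nat.strongRec generalizing v with | ind N ih =>
  cases w with
  | nil => simp at hw
  | @cons _ b _ hadj p =>
    by_cases hp : p.IsPath
    · exact ⟨v, cons hadj p, hp.isCycle_cons_of_odd_length hadj (hl ▸ hw), hl ▸ hw, hl.le,
        List.Subset.refl _⟩
    · -- `p` contains a nontrivial closed subwalk `c`; cutting it out leaves the closed walk
      -- `w'`, and one of `c`, `w'` is odd since their lengths add up to that of `w`.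
      have hcyc := mt isPath_iff_isSubwalk_imp_nil.mpr hp
      push Not at hcyc
      obtain ⟨x, c, ⟨ru, rv, rfl⟩, hc⟩ := hcyc
      have hc0 : c.length ≠ 0 := fun h0 => hc (length_eq_zero_iff.mp h0)
      let w' := cons hadj (ru.append rv)
      have hsum : N = c.length + w'.length := by
        simp only [w', ← hl, length_cons, length_append]; omega
      have hw'0 : w'.length ≠ 0 := Nat.succ_ne_zero _
      obtain ⟨y, d, hdo, hdl, hds⟩ : ∃ (y : V) (d : G.Walk y y),
          Odd d.length ∧ d.length < N ∧ d.edges ⊆ (cons hadj ((ru.append c).append rv)).edges := by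
        rw [hl, hsum] at hw
        rcases Nat.even_or_odd c.length with hce | hco
        · refine ⟨v, w', (Nat.odd_add'.mp hw).mpr hce, by omega, fun e he => ?_⟩
          simp only [w', edges_cons, edges_append, List.mem_cons, List.mem_append] at he ⊢
          tauto
        · exact ⟨x, c, hco, by omega, fun e he => by simp [he]⟩
      obtain ⟨u, c', hc', hc'o, hc'l, hc's⟩ := ih _ hdl d hdo rfl
      exact ⟨u, c', hc', hc'o, by omega, List.Subset.trans hc's hds⟩

theorem exists_walk_edges_eq_map (f : V → V') {u v : V} (w : G.Walk u v)
    (hf : ∀ x y, s(x, y) ∈ w.edges → G'.Adj (f x) (f y)) :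
    ∃ w' : G'.Walk (f u) (f v), w'.length = w.length ∧ w'.edges = w.edges.map (Sym2.map f) := by
  induction w with
  | nil => exact ⟨nil, rfl, rfl⟩
  | cons hadj p ih =>
    obtain ⟨w', hlen, hedges⟩ := ih fun x y he => hf x y (List.mem_cons_of_mem _ he)
    exact ⟨cons (hf _ _ (List.mem_cons_self ..)) w', by simp [hlen], by simp [hedges]⟩

end SimpleGraph.Walk

open SimpleGraph

section ProductColoring

variable {V W α β : Type*}

structure IsProductColoring (A : Sym2 V → α) (B : Sym2 W → β)
    (C : Sym2 (V × W) → α ⊕ β) : Prop where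
  fst_ne : ∀ g₁ g₂ h, g₁ ≠ g₂ → C s((g₁, h), (g₂, h)) = .inl (A s(g₁, g₂))
  snd_ne : ∀ g h₁ h₂, h₁ ≠ h₂ → C s((g, h₁), (g, h₂)) = .inr (B s(h₁, h₂))
  both_ne : ∀ g₁ g₂ h₁ h₂, g₁ ≠ g₂ → h₁ ≠ h₂ →
    C s((g₁, h₁), (g₂, h₂)) = .inl (A s(g₁, g₂)) ∨
      C s((g₁, h₁), (g₂, h₂)) = .inr (B s(h₁, h₂))

namespace IsProductColoring

variable {A : Sym2 V → α} {B : Sym2 W → β} {C : Sym2 (V × W) → α ⊕ β}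

theorem fst_ne_and_eq_of_eq_inl (hC : IsProductColoring A B C) {x y : V × W} (hxy : x ≠ y)
    {a : α} (h : C s(x, y) = .inl a) : x.1 ≠ y.1 ∧ A s(x.1, y.1) = a := by
  obtain ⟨g₁, h₁⟩ := x
  obtain ⟨g₂, h₂⟩ := y
  by_cases hg : g₁ = g₂ <;> by_cases hh : h₁ = h₂
  · simp_all
  · simp_all [hC.snd_ne]
  · simp_all [hC.fst_ne]
  · rcases hC.both_ne g₁ g₂ h₁ h₂ hg hh with h' | h' <;> simp_all

theorem snd_ne_and_eq_of_eq_inr (hC : IsProductColoring A B C) {x y : V × W} (hxy : x ≠ y)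
    {b : β} (h : C s(x, y) = .inr b) : x.2 ≠ y.2 ∧ B s(x.2, y.2) = b := by
  obtain ⟨g₁, h₁⟩ := x
  obtain ⟨g₂, h₂⟩ := y
  by_cases hg : g₁ = g₂ <;> by_cases hh : h₁ = h₂
  · simp_all
  · simp_all [hC.snd_ne]
  · simp_all [hC.fst_ne]
  · rcases hC.both_ne g₁ g₂ h₁ h₂ hg hh with h' | h' <;> simp_all

theorem exists_walk_fst_of_forall_eq_inl (hC : IsProductColoring A B C) {u v : V × W}
    (w : (⊤ : SimpleGraph (V × W)).Walk u v) {a : α} (hw : ∀ e ∈ w.edges, C e = .inl a) :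
    ∃ w' : (⊤ : SimpleGraph V).Walk u.1 v.1,
      w'.length = w.length ∧ ∀ e ∈ w'.edges, A e = a := by
  have hproj x y (he : s(x, y) ∈ w.edges) : x.1 ≠ y.1 ∧ A s(x.1, y.1) = a :=
    hC.fst_ne_and_eq_of_eq_inl (w.adj_of_mem_edges he) (hw _ he)
  obtain ⟨w', hlen, hedges⟩ :=
    w.exists_walk_edges_eq_map (G' := ⊤) Prod.fst fun x y he => (hproj x y he).1
  refine ⟨w', hlen, fun e' he' => ?_⟩
  obtain ⟨e, he, rfl⟩ := List.mem_map.mp (hedges ▸ he')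
  induction e using Sym2.ind
  exact (hproj _ _ he).2

theorem exists_walk_snd_of_forall_eq_inr (hC : IsProductColoring A B C) {u v : V × W}
    (w : (⊤ : SimpleGraph (V × W)).Walk u v) {b : β} (hw : ∀ e ∈ w.edges, C e = .inr b) :
    ∃ w' : (⊤ : SimpleGraph W).Walk u.2 v.2,
      w'.length = w.length ∧ ∀ e ∈ w'.edges, B e = b := by
  have hproj x y (he : s(x, y) ∈ w.edges) : x.2 ≠ y.2 ∧ B s(x.2, y.2) = b :=
    hC.snd_ne_and_eq_of_eq_inr (w.adj_of_mem_edges he) (hw _ he)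
  obtain ⟨w', hlen, hedges⟩ :=
    w.exists_walk_edges_eq_map (G' := ⊤) Prod.snd fun x y he => (hproj x y he).1
  refine ⟨w', hlen, fun e' he' => ?_⟩
  obtain ⟨e, he, rfl⟩ := List.mem_map.mp (hedges ▸ he')
  induction e using Sym2.ind
  exact (hproj _ _ he).2

end IsProductColoring

end ProductColoring

/-- Product colourings preserve odd girth: if `A` colours `K_m` and `B` colours
`K_n` (in disjoint colours, modelled by the sum type `α ⊕ β`), both with no
monochromatic odd cycle of length less than `r`, then any product colouring
`C ∈ ×(A,B)` of `K_{m} × K_{n}` has no monochromatic odd cycle of length less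
than `r`. -/
theorem stmt10 (r m n : ℕ) {α β : Type*}
    (A : Sym2 (Fin m) → α) (B : Sym2 (Fin n) → β)
    (hA : ∀ (v : Fin m) (w : (⊤ : SimpleGraph (Fin m)).Walk v v),
      w.IsCycle → Odd w.length → (∃ c, ∀ e ∈ w.edges, A e = c) → r ≤ w.length)
    (hB : ∀ (v : Fin n) (w : (⊤ : SimpleGraph (Fin n)).Walk v v),
      w.IsCycle → Odd w.length → (∃ c, ∀ e ∈ w.edges, B e = c) → r ≤ w.length)
    (C : Sym2 (Fin m × Fin n) → α ⊕ β)
    (h1 : ∀ g₁ g₂ h, g₁ ≠ g₂ → C s((g₁, h), (g₂, h)) = Sum.inl (A s(g₁, g₂)))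
    (h2 : ∀ g h₁ h₂, h₁ ≠ h₂ → C s((g, h₁), (g, h₂)) = Sum.inr (B s(h₁, h₂)))
    (h3 : ∀ g₁ g₂ h₁ h₂, g₁ ≠ g₂ → h₁ ≠ h₂ →
      C s((g₁, h₁), (g₂, h₂)) = Sum.inl (A s(g₁, g₂)) ∨
      C s((g₁, h₁), (g₂, h₂)) = Sum.inr (B s(h₁, h₂))) :
    ∀ (v : Fin m × Fin n) (w : (⊤ : SimpleGraph (Fin m × Fin n)).Walk v v),
      w.IsCycle → Odd w.length → (∃ c, ∀ e ∈ w.edges, C e = c) → r ≤ w.length := by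
  have hC : IsProductColoring A B C := ⟨h1, h2, h3⟩
  rintro v w - hodd ⟨a | b, hw⟩
  · obtain ⟨w', hlen, hw'⟩ := hC.exists_walk_fst_of_forall_eq_inl w hw
    obtain ⟨u, c, hc, hco, hcl, hce⟩ := w'.exists_odd_isCycle_of_odd_length (hlen ▸ hodd)
    exact hlen ▸ (hA u c hc hco ⟨a, fun e he => hw' e (hce he)⟩).trans hcl
  · obtain ⟨w', hlen, hw'⟩ := hC.exists_walk_snd_of_forall_eq_inr w hw
    obtain ⟨u, c, hc, hco, hcl, hce⟩ := w'.exists_odd_isCycle_of_odd_length (hlen ▸ hodd)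
    exact hlen ▸ (hB u c hc hco ⟨b, fun e he => hw' e (hce he)⟩).trans hcl
end

section
/- Define the sequence r_2 = (5,5) and for j > 2 let r_j be the increasing rearrangement of f(r_{j-1}), where f((r_1,...,r_k)) = (r_1+2, r_2, ..., r_k, 2r_1 - 1) applied with r_1 minimal. Let p(t) = ∏_{i=0}^{t-2} (2^i + 1). Then for all t ≥ 2, the minimum entry of r_{p(t)} is at least 2^t + 1. -/
/-- The operation `f`: add 2 to the first (minimal) entry of a sorted sequence
and append `2·(minimal entry) − 1`. -/
def roundStep : List ℕ → List ℕ
  | [] => []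
  | a :: t => (a + 2) :: (t ++ [2 * a - 1])

/-- `seqRRC j` is the sequence `r_{j+2}`: `r_2 = (5,5)`, and `r_{j+1}` is the
increasing rearrangement of `f(r_j)`. -/
def seqRRC : ℕ → List ℕ
  | 0 => [5, 5]
  | j + 1 => (roundStep (seqRRC j)).insertionSort (· ≤ ·)

/-- `p t = ∏_{i=0}^{t-2} (2^i + 1)`. -/
def pProd (t : ℕ) : ℕ := ∏ i ∈ Finset.range (t - 1), (2 ^ i + 1)

/-!
All entries stay odd and the step always touches the minimum. Suppose every entry is at least
`2m + 1` and measure the distance to the next target `4m + 1` by the deficit `∑ (4m + 1 - x)`.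
While the minimum `a` is below `4m + 1`, oddness gives `a + 2 ≤ 4m + 1`, and the appended entry
`2a - 1` is already at least `4m + 1`, so each step lowers the deficit by exactly `2`. A list of
length `L` starts with deficit at most `2mL`, so after `mL` steps every entry is at least `4m + 1`.
With `m = 2^(t-1)` and `L = p(t)` this takes `r_{p(t)}` to `r_{p(t+1)}`, since
`p(t+1) = p(t) (2^(t-1) + 1)`.
-/

lemma mem_roundStep_cons {a x : ℕ} {t : List ℕ} :
    x ∈ roundStep (a :: t) ↔ x = a + 2 ∨ x ∈ t ∨ x = 2 * a - 1 := by
  simp [roundStep]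

lemma odd_of_mem_roundStep {l : List ℕ} (h : ∀ x ∈ l, Odd x) : ∀ x ∈ roundStep l, Odd x := by
  cases l with
  | nil => simp [roundStep]
  | cons a t =>
    obtain ⟨u, hu⟩ := h a List.mem_cons_self
    intro x hx
    rcases mem_roundStep_cons.mp hx with rfl | hx | rfl
    · exact ⟨u + 1, by omega⟩
    · exact h x (List.mem_cons_of_mem a hx)
    · exact ⟨2 * u, by omega⟩

lemma le_of_mem_roundStep {c : ℕ} {l : List ℕ} (h : ∀ x ∈ l, c ≤ x) :
    ∀ x ∈ roundStep l, c ≤ x := by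
  cases l with
  | nil => simp [roundStep]
  | cons a t =>
    have ha := h a List.mem_cons_self
    intro x hx
    rcases mem_roundStep_cons.mp hx with rfl | hx | rfl
    · omega
    · exact h x (List.mem_cons_of_mem a hx)
    · omega

lemma seqRRC_succ_perm (j : ℕ) : (seqRRC (j + 1)).Perm (roundStep (seqRRC j)) :=
  List.perm_insertionSort _ _

lemma length_seqRRC (j : ℕ) : (seqRRC j).length = j + 2 := by
  induction j with
  | zero => rfl
  | succ j ih =>
    rw [(seqRRC_succ_perm j).length_eq]
    cases h : seqRRC j <;> simp_all [roundStep]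

lemma seqRRC_ne_nil (j : ℕ) : seqRRC j ≠ [] :=
  List.ne_nil_of_length_pos (by rw [length_seqRRC]; omega)

lemma pairwise_le_seqRRC : ∀ j, (seqRRC j).Pairwise (· ≤ ·)
  | 0 => by decide
  | _ + 1 => List.pairwise_insertionSort _ _

lemma odd_of_mem_seqRRC (j : ℕ) : ∀ x ∈ seqRRC j, Odd x := by
  induction j with
  | zero => decide
  | succ j ih =>
    intro x hx
    exact odd_of_mem_roundStep ih x ((seqRRC_succ_perm j).subset hx)

lemma le_of_mem_seqRRC_add {c j : ℕ} (h : ∀ x ∈ seqRRC j, c ≤ x) (k : ℕ) :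
    ∀ x ∈ seqRRC (j + k), c ≤ x := by
  induction k with
  | zero => exact h
  | succ k ih =>
    intro x hx
    exact le_of_mem_roundStep ih x ((seqRRC_succ_perm (j + k)).subset hx)

def deficit (N : ℕ) (l : List ℕ) : ℕ := (l.map (N - ·)).sum

lemma deficit_eq_zero_iff {N : ℕ} {l : List ℕ} : deficit N l = 0 ↔ ∀ x ∈ l, N ≤ x := by
  simp [deficit, List.sum_eq_zero_iff, Nat.sub_eq_zero_iff_le]

lemma List.Perm.deficit_eq {N : ℕ} {l l' : List ℕ} (h : l.Perm l') : deficit N l = deficit N l' :=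
  (h.map _).sum_eq

lemma deficit_le {N d : ℕ} {l : List ℕ} (h : ∀ x ∈ l, N ≤ x + d) : deficit N l ≤ l.length * d := by
  have := List.sum_le_card_nsmul (l.map (N - ·)) d (by simpa [add_comm] using h)
  simpa [deficit] using this

lemma deficit_roundStep_cons {N a : ℕ} {t : List ℕ} (hN : Odd N) (ha : Odd a) (haN : a < N)
    (hN2 : N ≤ 2 * a - 1) : deficit N (roundStep (a :: t)) + 2 = deficit N (a :: t) := by
  obtain ⟨u, rfl⟩ := hN
  obtain ⟨v, rfl⟩ := ha
  simp only [deficit, roundStep, List.map_cons, List.map_append, List.sum_cons, List.sum_append,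
    List.map_nil, List.sum_nil]
  omega

lemma le_of_mem_seqRRC_of_deficit_le {m j : ℕ} (k : ℕ) (hlb : ∀ x ∈ seqRRC j, 2 * m + 1 ≤ x)
    (hdef : deficit (4 * m + 1) (seqRRC j) ≤ 2 * k) : ∀ x ∈ seqRRC (j + k), 4 * m + 1 ≤ x := by
  induction k generalizing j with
  | zero => exact deficit_eq_zero_iff.mp (by simpa using hdef)
  | succ k ih =>
    obtain ⟨a, t, hj⟩ := List.exists_cons_of_ne_nil (seqRRC_ne_nil j)
    have ha : 2 * m + 1 ≤ a := hlb a (hj ▸ List.mem_cons_self)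
    by_cases hdone : 4 * m + 1 ≤ a
    · have hsorted := pairwise_le_seqRRC j
      rw [hj, List.pairwise_cons] at hsorted
      refine le_of_mem_seqRRC_add ?_ (k + 1)
      rw [hj]
      exact List.forall_mem_cons.2 ⟨hdone, fun x hx => hdone.trans (hsorted.1 x hx)⟩
    · have hdrop : deficit (4 * m + 1) (seqRRC (j + 1)) + 2 = deficit (4 * m + 1) (seqRRC j) := by
        rw [(seqRRC_succ_perm j).deficit_eq, hj]
        exact deficit_roundStep_cons ⟨2 * m, by ring⟩
          (odd_of_mem_seqRRC j a (hj ▸ List.mem_cons_self)) (by omega) (by omega)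
      rw [← add_assoc, add_right_comm]
      exact ih (le_of_mem_seqRRC_add hlb 1) (by omega)

lemma le_of_mem_seqRRC_doubling {m j : ℕ} (hlb : ∀ x ∈ seqRRC j, 2 * m + 1 ≤ x) :
    ∀ x ∈ seqRRC (j + (j + 2) * m), 4 * m + 1 ≤ x := by
  refine le_of_mem_seqRRC_of_deficit_le _ hlb ?_
  calc deficit (4 * m + 1) (seqRRC j) ≤ (seqRRC j).length * (2 * m) :=
        deficit_le fun x hx => by have := hlb x hx; omega
    _ = 2 * ((j + 2) * m) := by rw [length_seqRRC]; ring

lemma pProd_succ {t : ℕ} (ht : 1 ≤ t) : pProd (t + 1) = pProd t * (2 ^ (t - 1) + 1) := by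
  obtain ⟨s, rfl⟩ := Nat.exists_eq_add_of_le' ht
  simp [pProd, Finset.prod_range_succ]

lemma two_le_pProd {t : ℕ} (ht : 2 ≤ t) : 2 ≤ pProd t := by
  induction t, ht using Nat.le_induction with
  | base => decide
  | succ t ht ih => rw [pProd_succ (by omega)]; nlinarith [Nat.one_le_two_pow (n := t - 1)]

/-- For all `t ≥ 2`, every entry (in particular the minimum entry) of the
sequence `r_{p(t)} = seqRRC (p t - 2)` is at least `2^t + 1`. -/
theorem stmt14 (t : ℕ) (ht : 2 ≤ t) :
    ∀ x ∈ seqRRC (pProd t - 2), 2 ^ t + 1 ≤ x := by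
  induction t, ht using Nat.le_induction with
  | base => decide
  | succ t ht ih =>
    have hm : 2 ^ t = 2 * 2 ^ (t - 1) := by rw [← pow_succ']; congr; omega
    have hidx : pProd t - 2 + (pProd t - 2 + 2) * 2 ^ (t - 1) = pProd (t + 1) - 2 := by
      have := two_le_pProd ht
      rw [pProd_succ (by omega), Nat.sub_add_cancel this, mul_add, mul_one]
      omega
    rw [← hidx, pow_succ, hm]
    rw [hm] at ih
    convert le_of_mem_seqRRC_doubling ih using 3
    ring
end

section
/- If a graph G is r-round with r odd and G contains an odd cycle, then every odd cycle of G contains, for each i with 1 ≤ i ≤ r, at least one edge between the consecutive pair of parts (X_i, X_{i+1}) (indices mod r). -/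
/-!
Cutting the cycle `ℤ/r` open between `i` and `i + 1` leaves a path. If an odd closed walk used
no edge between `X_i` and `X_{i+1}`, then, after deleting those edges, the labelling
`x ↦ (p x - (i + 1)).val` would be a homomorphism onto the path graph on `Fin r`, and a path
is bipartite, so the walk would have even length.
-/

theorem ZMod.val_add_one_of_ne_neg_one {n : ℕ} [NeZero n] {x : ZMod n} (hx : x ≠ -1) :
    (x + 1).val = x.val + 1 := by
  have hlt : x.val + 1 < n := by
    refine lt_of_le_of_ne x.val_lt fun h => hx ?_
    rw [eq_neg_iff_add_eq_zero, ← ZMod.natCast_zmod_val x]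
    exact_mod_cast (congrArg (Nat.cast : ℕ → ZMod n) h).trans (ZMod.natCast_self n)
  have : Fact (1 < n) := ⟨by omega⟩
  rw [ZMod.val_add_of_lt (by rwa [ZMod.val_one]), ZMod.val_one]

namespace SimpleGraph

variable {V : Type*} {n : ℕ} [NeZero n]

def homPathGraphOfCyclicLabel (G : SimpleGraph V) (p : V → ZMod n) (i : ZMod n)
    (hp : ∀ u v : V, G.Adj u v → p v = p u + 1 ∨ p u = p v + 1)
    (hcut : ∀ u v : V, G.Adj u v → p u = i → p v ≠ i + 1) : G →g pathGraph n where
  toFun x := ⟨(p x - (i + 1)).val, ZMod.val_lt _⟩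
  map_rel' {a b} hab := by
    have step : ∀ u v, G.Adj u v → p v = p u + 1 →
        (p v - (i + 1)).val = (p u - (i + 1)).val + 1 := by
      intro u v huv hpv
      rw [show p v - (i + 1) = p u - (i + 1) + 1 by rw [hpv]; ring]
      refine ZMod.val_add_one_of_ne_neg_one fun h => hcut u v huv ?_ ?_
      · linear_combination h
      · rw [hpv]; linear_combination h
    rw [pathGraph_adj]
    rcases hp a b hab with h | h
    exacts [Or.inl (step a b hab h).symm, Or.inr (step b a hab.symm h).symm]

end SimpleGraph

open SimpleGraph in
theorem stmt17_general {V : Type*} (G : SimpleGraph V) (r : ℕ) (hr : Odd r)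
    (p : V → ZMod r)
    (hp : ∀ u v : V, G.Adj u v → p v = p u + 1 ∨ p u = p v + 1)
    (v : V) (w : G.Walk v v) (ho : Odd w.length) :
    ∀ i : ZMod r, ∃ a b : V, p a = i ∧ p b = i + 1 ∧ s(a, b) ∈ w.edges := by
  have : NeZero r := ⟨hr.pos.ne'⟩
  intro i
  by_contra! hno
  set H := G.deleteEdges {e | ∃ a b, p a = i ∧ p b = i + 1 ∧ e = s(a, b)}
  have hH : ∀ e ∈ w.edges, e ∈ H.edgeSet := fun e he => by
    refine (edgeSet_deleteEdges _).ge ⟨w.edges_subset_edgeSet he, ?_⟩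
    rintro ⟨a, b, ha, hb, rfl⟩
    exact hno a b ha hb he
  let c : H.Coloring Bool := (pathGraph.bicoloring r).comp <|
    homPathGraphOfCyclicLabel H p i (fun u v huv => hp u v (deleteEdges_adj.mp huv).1)
      (fun u v huv hu hv => (deleteEdges_adj.mp huv).2 ⟨u, v, hu, hv, rfl⟩)
  exact not_iff_self <|
    (c.odd_length_iff_not_congr (w.transfer H hH)).mp (by rwa [Walk.length_transfer])

/-- In an `r`-round graph (`r` odd) with cyclic partition `p : V → ZMod r`,
every odd cycle contains, for each index `i`, at least one edge between the
consecutive parts `X_i` and `X_{i+1}`. -/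
theorem stmt17 {V : Type*} (G : SimpleGraph V) (r : ℕ) (hr : Odd r)
    (p : V → ZMod r)
    (hp : ∀ u v : V, G.Adj u v → p v = p u + 1 ∨ p u = p v + 1)
    (v : V) (w : G.Walk v v) (hc : w.IsCycle) (ho : Odd w.length) :
    ∀ i : ZMod r, ∃ a b : V, p a = i ∧ p b = i + 1 ∧ s(a, b) ∈ w.edges :=
  stmt17_general G r hr p hp v w ho
end

section
/- If there exist edge colourings with q colours of K_m and with s colours of K_n, each having no monochromatic odd cycle of length less than r, then there exists an edge colouring of K_{mn} with q+s colours having no monochromatic odd cycle of length less than r. -/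
/-!
On pairs, colour the edge `{(a, b), (a', b')}` by `C₁ {a, a'}` when `a ≠ a'` and by
`C₂ {b, b'}` (a colour from a disjoint palette) when `a = a'`. Every colour class then maps
homomorphically, through one of the two projections, into a colour class of `C₁` or of `C₂`.
A homomorphism preserves odd closed walks and their lengths, and every odd closed walk
contains an odd cycle that is no longer, so odd cycles of a colour class cannot be shorter
than those of its image.
-/

namespace SimpleGraph

variable {V W κ : Type*} {G : SimpleGraph V} {r : ℕ}

namespace Walk

lemma exists_loop_of_not_isPath [DecidableEq V] {u v : V} (p : G.Walk u v) (hp : ¬p.IsPath) :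
    ∃ (x : V) (c : G.Walk x x) (p' : G.Walk u v), 0 < c.length ∧
      p.length = c.length + p'.length := by
  induction p with
  | nil => exact absurd IsPath.nil hp
  | @cons u w v h q ih =>
    by_cases hq : q.IsPath
    · have hu : u ∈ q.support := by
        by_contra hu
        exact hp ((cons_isPath_iff h q).mpr ⟨hq, hu⟩)
      refine ⟨u, cons h (q.takeUntil u hu), q.dropUntil u hu, by simp, ?_⟩
      have hsplit := congrArg length (q.take_spec hu)
      rw [length_append] at hsplit
      simp only [length_cons]
      omega
    · obtain ⟨x, c, q', hc, hlen⟩ := ih hq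
      exact ⟨x, c, cons h q', hc, by simp only [length_cons]; omega⟩

-- A closed walk that is not a cycle splits into two shorter closed walks
-- whose lengths add up to its own, and one of them is odd.
lemma exists_odd_isCycle_length_le {u : V} (w : G.Walk u u) (hw : Odd w.length) :
    ∃ (v : V) (c : G.Walk v v), c.IsCycle ∧ Odd c.length ∧ c.length ≤ w.length := by
  classical
  induction hn : w.length using Nat.strong_induction_on generalizing u with
  | _ n ih =>
  subst hn
  cases w with
  | nil => simp at hw
  | @cons _ v _ h p =>
    by_cases hp : p.IsPath
    · by_cases he : s(u, v) ∈ p.edges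
      · rw [Sym2.eq_swap] at he
        rw [length_cons, hp.length_eq_one_of_mem_edges he] at hw
        exact absurd hw (by decide)
      · exact ⟨u, cons h p, (cons_isCycle_iff p h).mpr ⟨hp, he⟩, hw, le_rfl⟩
    · obtain ⟨x, c, p', hc, hlen⟩ := p.exists_loop_of_not_isPath hp
      have hsplit : (cons h p).length = c.length + (cons h p').length := by
        simp only [length_cons]; omega
      have hshort : (cons h p').length < (cons h p).length := by omega
      have hcshort : c.length < (cons h p).length := by simp only [length_cons]; omega
      rcases Nat.even_or_odd c.length with hceven | hcodd
      · have hodd : Odd (cons h p').length := by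
          rw [hsplit] at hw; exact (Nat.odd_add'.mp hw).mpr hceven
        obtain ⟨y, d, hd, hdodd, hdlen⟩ := ih _ hshort (cons h p') hodd rfl
        exact ⟨y, d, hd, hdodd, hdlen.trans hshort.le⟩
      · obtain ⟨y, d, hd, hdodd, hdlen⟩ := ih _ hcshort c hcodd rfl
        exact ⟨y, d, hd, hdodd, hdlen.trans hcshort.le⟩

end Walk

def NoOddCycleShorterThan (G : SimpleGraph V) (r : ℕ) : Prop :=
  ∀ (v : V) (c : G.Walk v v), c.IsCycle → Odd c.length → r ≤ c.length

lemma NoOddCycleShorterThan.le_length (hG : G.NoOddCycleShorterThan r) {u : V}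
    (w : G.Walk u u) (hw : Odd w.length) : r ≤ w.length := by
  obtain ⟨v, c, hc, hcodd, hclen⟩ := w.exists_odd_isCycle_length_le hw
  exact (hG v c hc hcodd).trans hclen

lemma NoOddCycleShorterThan.of_hom {H : SimpleGraph W} (f : H →g G)
    (hG : G.NoOddCycleShorterThan r) : H.NoOddCycleShorterThan r := by
  intro v c _ hodd
  rw [← Walk.length_map f c] at hodd ⊢
  exact hG.le_length _ hodd

def edgeColorClass (C : Sym2 V → κ) (c : κ) : SimpleGraph V :=
  fromEdgeSet {e | C e = c}

def NoShortMonochromaticOddCycle (r : ℕ) (C : Sym2 V → κ) : Prop :=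
  ∀ (v : V) (w : (⊤ : SimpleGraph V).Walk v v),
    w.IsCycle → Odd w.length → (∃ c, ∀ e ∈ w.edges, C e = c) → r ≤ w.length

lemma noShortMonochromaticOddCycle_iff {C : Sym2 V → κ} :
    NoShortMonochromaticOddCycle r C ↔ ∀ c, (edgeColorClass C c).NoOddCycleShorterThan r := by
  constructor
  · intro h c v w hw hodd
    have hmono : ∀ e ∈ (w.mapLe le_top).edges, C e = c := by
      intro e he
      rw [Walk.edges_mapLe_eq_edges] at he
      have := w.edges_subset_edgeSet he
      rw [edgeColorClass, edgeSet_fromEdgeSet] at this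
      exact this.1
    rw [← Walk.length_mapLe le_top w] at hodd ⊢
    exact h v _ (hw.mapLe le_top) hodd ⟨c, hmono⟩
  · rintro h v w hw hodd ⟨c, hc⟩
    have hsub : ∀ e ∈ w.edges, e ∈ (edgeColorClass C c).edgeSet := by
      intro e he
      rw [edgeColorClass, edgeSet_fromEdgeSet]
      exact ⟨hc e he, by simpa using w.edges_subset_edgeSet he⟩
    rw [← Walk.length_transfer w hsub] at hodd ⊢
    exact h c v _ (hw.transfer hsub) hodd

variable {α β κ₁ κ₂ : Type*} [DecidableEq α]

def prodEdgeColoring (C₁ : Sym2 α → κ₁) (C₂ : Sym2 β → κ₂) : Sym2 (α × β) → κ₁ ⊕ κ₂ :=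
  Sym2.lift ⟨fun x y => if x.1 = y.1 then .inr (C₂ s(x.2, y.2)) else .inl (C₁ s(x.1, y.1)),
    fun x y => by simp only [eq_comm (a := x.1), Sym2.eq_swap]⟩

lemma edgeColorClass_prodEdgeColoring_inl_adj {C₁ : Sym2 α → κ₁} {C₂ : Sym2 β → κ₂} {i : κ₁}
    {x y : α × β} (hxy : (edgeColorClass (prodEdgeColoring C₁ C₂) (.inl i)).Adj x y) :
    (edgeColorClass C₁ i).Adj x.1 y.1 := by
  simp only [edgeColorClass, fromEdgeSet_adj, Set.mem_ofPred_eq, prodEdgeColoring,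
    Sym2.lift_mk] at hxy ⊢
  split_ifs at hxy with h
  · exact hxy.1.elim
  · exact ⟨Sum.inl_injective hxy.1, h⟩

lemma edgeColorClass_prodEdgeColoring_inr_adj {C₁ : Sym2 α → κ₁} {C₂ : Sym2 β → κ₂} {j : κ₂}
    {x y : α × β} (hxy : (edgeColorClass (prodEdgeColoring C₁ C₂) (.inr j)).Adj x y) :
    (edgeColorClass C₂ j).Adj x.2 y.2 := by
  simp only [edgeColorClass, fromEdgeSet_adj, Set.mem_ofPred_eq, prodEdgeColoring,
    Sym2.lift_mk] at hxy ⊢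
  split_ifs at hxy with h
  · exact ⟨Sum.inr_injective hxy.1, fun h' => hxy.2 (Prod.ext h h')⟩
  · exact hxy.1.elim

namespace NoShortMonochromaticOddCycle

lemma prodEdgeColoring {C₁ : Sym2 α → κ₁} {C₂ : Sym2 β → κ₂}
    (h₁ : NoShortMonochromaticOddCycle r C₁) (h₂ : NoShortMonochromaticOddCycle r C₂) :
    NoShortMonochromaticOddCycle r (prodEdgeColoring C₁ C₂) := by
  rw [noShortMonochromaticOddCycle_iff] at h₁ h₂ ⊢
  rintro (i | j)
  · exact (h₁ i).of_hom ⟨Prod.fst, edgeColorClass_prodEdgeColoring_inl_adj⟩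
  · exact (h₂ j).of_hom ⟨Prod.snd, edgeColorClass_prodEdgeColoring_inr_adj⟩

lemma comp_equiv {C : Sym2 V → κ} (h : NoShortMonochromaticOddCycle r C) (g : κ ≃ κ₁) :
    NoShortMonochromaticOddCycle r (g ∘ C) := by
  rintro v w hw hodd ⟨c, hc⟩
  exact h v w hw hodd ⟨g.symm c, fun e he => g.eq_symm_apply.mpr (hc e he)⟩

lemma comp_sym2Map {C : Sym2 V → κ} (h : NoShortMonochromaticOddCycle r C) (f : W ↪ V) :
    NoShortMonochromaticOddCycle r (C ∘ Sym2.map f) := by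
  rw [noShortMonochromaticOddCycle_iff] at h ⊢
  intro c
  refine (h c).of_hom ⟨f, fun hxy => ?_⟩
  simp only [edgeColorClass, fromEdgeSet_adj, Set.mem_ofPred_eq, Function.comp_apply,
    Sym2.map_mk] at hxy ⊢
  exact ⟨hxy.1, f.injective.ne hxy.2⟩

end NoShortMonochromaticOddCycle

end SimpleGraph

/-- If `K_m` has a `q`-colouring and `K_n` has an `s`-colouring, each with no
monochromatic odd cycle of length less than `r`, then `K_{mn}` has a
`(q+s)`-colouring with no monochromatic odd cycle of length less than `r`. -/
theorem stmt18 (r m n q s : ℕ)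
    (hm : ∃ C₁ : Sym2 (Fin m) → Fin q,
      ∀ (v : Fin m) (w : (⊤ : SimpleGraph (Fin m)).Walk v v),
        w.IsCycle → Odd w.length → (∃ c, ∀ e ∈ w.edges, C₁ e = c) → r ≤ w.length)
    (hn : ∃ C₂ : Sym2 (Fin n) → Fin s,
      ∀ (v : Fin n) (w : (⊤ : SimpleGraph (Fin n)).Walk v v),
        w.IsCycle → Odd w.length → (∃ c, ∀ e ∈ w.edges, C₂ e = c) → r ≤ w.length) :
    ∃ C : Sym2 (Fin (m * n)) → Fin (q + s),
      ∀ (v : Fin (m * n)) (w : (⊤ : SimpleGraph (Fin (m * n))).Walk v v),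
        w.IsCycle → Odd w.length → (∃ c, ∀ e ∈ w.edges, C e = c) → r ≤ w.length := by
  obtain ⟨C₁, h₁ : SimpleGraph.NoShortMonochromaticOddCycle r C₁⟩ := hm
  obtain ⟨C₂, h₂ : SimpleGraph.NoShortMonochromaticOddCycle r C₂⟩ := hn
  exact ⟨finSumFinEquiv ∘ SimpleGraph.prodEdgeColoring C₁ C₂ ∘ Sym2.map finProdFinEquiv.symm,
    ((h₁.prodEdgeColoring h₂).comp_equiv finSumFinEquiv).comp_sym2Map
      finProdFinEquiv.symm.toEmbedding⟩
end

section
/- If a rooted r-round graph G with root O contains an odd cycle of length exactly r (r odd), then that cycle passes through the root O. -/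
/-!
Away from the root every label is nonzero, so along an edge the representative in `{1, …, r-1}`
of the label changes by exactly `±1`: its parity is a proper `2`-colouring of `G - O`.
Hence every closed walk avoiding `O` has even length, and one of odd length `r` must meet `O`.
-/

theorem ZMod.val_add_one_of_ne_zero {n : ℕ} [NeZero n] {a : ZMod n} (h : a + 1 ≠ 0) :
    (a + 1).val = a.val + 1 := by
  have hn : n ≠ 1 := by
    rintro rfl
    exact h (Subsingleton.elim _ _)
  rw [ZMod.val_add, ZMod.val_one'' hn]
  refine Nat.mod_eq_of_lt (lt_of_le_of_ne (ZMod.val_lt a) fun hparity => h ?_)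
  rw [← ZMod.val_eq_zero, ZMod.val_add, ZMod.val_one'' hn, hparity, Nat.mod_self]

theorem SimpleGraph.Walk.length_induce {V : Type*} {G : SimpleGraph V} {s : Set V} {u v : V}
    (w : G.Walk u v) (hw : ∀ x ∈ w.support, x ∈ s) : (w.induce s hw).length = w.length :=
  (length_map _ _).symm.trans (congrArg length (w.map_induce hw))

namespace IsRootedRound

variable {V : Type*} {G : SimpleGraph V} {r : ℕ} {O : V}

theorem colorable_induce_compl_root [NeZero r] (h : IsRootedRound G r O) :
    (G.induce {O}ᶜ).Colorable 2 := by
  obtain ⟨p, hadj, -, hroot⟩ := h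
  have hparity : ∀ x y : ({O}ᶜ : Set V), p y = p x + 1 → ¬(Even (p x).val ↔ Even (p y).val) := by
    intro x y hxy
    have hne : p x + 1 ≠ 0 := fun h0 => y.2 (hroot y (hxy.trans h0))
    rw [hxy, ZMod.val_add_one_of_ne_zero hne, Nat.even_add_one]
    tauto
  let c : (G.induce {O}ᶜ).Coloring Bool :=
    SimpleGraph.Coloring.mk (fun x => decide (Even (p x).val)) <| by
      intro x y hxy
      simp only [ne_eq, decide_eq_decide]
      rcases hadj x y (SimpleGraph.induce_adj.1 hxy) with hy | hx
      · exact hparity x y hy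
      · exact fun hiff => hparity y x hx hiff.symm
  simpa using c.colorable

end IsRootedRound

theorem stmt19_general {V : Type*} (G : SimpleGraph V) (r : ℕ) (hr : Odd r) (O : V)
    (h : IsRootedRound G r O) (v : V) (w : G.Walk v v)
    (hl : w.length = r) : O ∈ w.support := by
  have : NeZero r := ⟨hr.pos.ne'⟩
  by_contra hO
  have hw : ∀ x ∈ w.support, x ∈ ({O}ᶜ : Set V) := fun x hx hxO => hO (hxO ▸ hx)
  have hodd : Odd (w.induce {O}ᶜ hw).length := by
    rwa [SimpleGraph.Walk.length_induce, hl]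
  have hχ_ge := (w.induce {O}ᶜ hw).three_le_chromaticNumber_of_odd_loop hodd
  have hχ_le := h.colorable_induce_compl_root.chromaticNumber_le
  exact absurd (hχ_ge.trans hχ_le) (by norm_num)

/-- In a rooted `r`-round graph with root `O` (`r` odd), every odd cycle of
length exactly `r` passes through the root. -/
theorem stmt19 {V : Type*} (G : SimpleGraph V) (r : ℕ) (hr : Odd r) (O : V)
    (h : IsRootedRound G r O) (v : V) (w : G.Walk v v) (hc : w.IsCycle)
    (hl : w.length = r) : O ∈ w.support :=
  stmt19_general G r hr O h v w hl
end
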